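/- arXiv:2602.06428 — 5 statements merged into one kernel-verified Lean document; each statement's English description precedes it below -/
import Mathlib

section
/- Let V be a real Banach space and let Λ : V → ℝ be a continuous convex function. Let μ₀ : V → ℝ be a continuous linear functional that is bounded by Λ, i.e. μ₀(f) ≤ Λ(f) for all f ∈ V. Then for every f₀ ∈ V and every ε > 0 there exist a continuous linear functional μ : V → ℝ and an element f ∈ V such that μ is tangent to Λ at f (i.e. μ(g) ≤ Λ(f+g) − Λ(f) for all g ∈ V), ‖μ − μ₀‖ ≤ ε (operator norm), and ‖f − f₀‖ ≤ (1/ε)(Λ(f₀) − μ₀(f₀) + s), where s := sup{μ₀(g) − Λ(g) : g ∈ V} (note s ≤ 0). -/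
/-!
By Ekeland's variational principle applied to `Λ - μ₀` (bounded below by `-s`), there is a point
`f` with `ε‖f - f₀‖ ≤ (Λ - μ₀) f₀ - (Λ - μ₀) f ≤ (Λ - μ₀) f₀ + s` at which `Λ - μ₀` lies above
the concave cone `(Λ - μ₀) f - ε‖· - f‖`. Separating the epigraph of `Λ - μ₀` from the strict
hypograph of that cone (Hahn–Banach) gives an affine function squeezed between them; it touches
`Λ - μ₀` at `f`, so its linear part `ν` is a subgradient of `Λ - μ₀` at `f` with `‖ν‖ ≤ ε`, and
`μ = μ₀ + ν` is tangent to `Λ` at `f`.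
-/

open Set Filter Topology Metric

section Ekeland

variable {α : Type*} [MetricSpace α] {h : α → ℝ} {ε : ℝ}

def ekelandSet (h : α → ℝ) (ε : ℝ) (x : α) : Set α := {y | h y + ε * dist y x ≤ h x}

lemma self_mem_ekelandSet (x : α) : x ∈ ekelandSet h ε x := by
  simp [ekelandSet]

lemma ekelandSet_subset (hε : 0 ≤ ε) {x y : α} (hy : y ∈ ekelandSet h ε x) :
    ekelandSet h ε y ⊆ ekelandSet h ε x := fun z hz => by
  have htri : ε * dist z x ≤ ε * dist z y + ε * dist y x := by
    rw [← mul_add]; exact mul_le_mul_of_nonneg_left (dist_triangle z y x) hε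
  simp only [ekelandSet, mem_ofPred_eq] at hy hz ⊢
  linarith

lemma LowerSemicontinuous.isClosed_ekelandSet (hh : LowerSemicontinuous h) (x : α) :
    IsClosed (ekelandSet h ε x) :=
  (hh.add (continuous_const.mul (continuous_id.dist continuous_const)).lowerSemicontinuous
    ).isClosed_preimage (h x)

lemma exists_ekelandSet_subset_closedBall (hbdd : BddBelow (range h)) (hε : 0 < ε) (x : α)
    {δ : ℝ} (hδ : 0 < δ) : ∃ y ∈ ekelandSet h ε x, ekelandSet h ε y ⊆ closedBall y δ := by
  set m := sInf (h '' ekelandSet h ε x)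
  obtain ⟨_, ⟨y, hy, rfl⟩, hym⟩ := exists_lt_of_csInf_lt
    ((nonempty_of_mem (self_mem_ekelandSet x)).image h) (lt_add_of_pos_right m (mul_pos hε hδ))
  -- `y` is an `εδ`-minimizer of `h` on `ekelandSet h ε x`, which contains `ekelandSet h ε y`.
  refine ⟨y, hy, fun z hz => ?_⟩
  have hmz : m ≤ h z := csInf_le (hbdd.mono (image_subset_range _ _))
    (mem_image_of_mem h (ekelandSet_subset hε.le hy hz))
  have hz' : h z + ε * dist z y ≤ h y := hz
  rw [mem_closedBall]
  nlinarith

/-- **Ekeland's variational principle.** -/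
theorem LowerSemicontinuous.exists_le_add_dist [CompleteSpace α] (hh : LowerSemicontinuous h)
    (hbdd : BddBelow (range h)) (hε : 0 < ε) (x₀ : α) :
    ∃ x, h x + ε * dist x x₀ ≤ h x₀ ∧ ∀ y, h x ≤ h y + ε * dist y x := by
  choose next hnext hball using fun (x : α) (n : ℕ) =>
    exists_ekelandSet_subset_closedBall hbdd hε x (Nat.one_div_pos_of_nat (n := n))
  let x : ℕ → α := fun n => Nat.rec x₀ (fun n xn => next xn n) n
  set s : ℕ → Set α := fun n => ekelandSet h ε (x (n + 1))
  have hanti : Antitone s :=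
    antitone_nat_of_succ_le fun n => ekelandSet_subset hε.le (hnext _ _)
  have hbounded : ∀ n, Bornology.IsBounded (s n) := fun n =>
    isBounded_closedBall.subset (hball _ _)
  have hdiam : Tendsto (fun n => diam (s n)) atTop (𝓝 0) := by
    refine squeeze_zero (fun n => diam_nonneg)
      (fun n => diam_le_of_subset_closedBall (by positivity) (hball _ _)) ?_
    simpa using tendsto_one_div_add_atTop_nhds_zero_nat.const_mul (2 : ℝ)
  obtain ⟨x', hx'⟩ := nonempty_iInter_of_nonempty_biInter (fun n => hh.isClosed_ekelandSet _)
    hbounded (fun N => ⟨x (N + 1), mem_iInter₂.2 fun n hn => hanti hn (self_mem_ekelandSet _)⟩)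
    hdiam
  rw [mem_iInter] at hx'
  refine ⟨x', ekelandSet_subset hε.le (hnext x₀ 0) (hx' 0), fun y => ?_⟩
  by_contra! hy
  have hys : ∀ n, y ∈ s n := fun n => ekelandSet_subset hε.le (hx' n) hy.le
  have hyx : dist y x' ≤ 0 :=
    ge_of_tendsto' hdiam fun n => dist_le_diam_of_mem (hbounded n) (hys n) (hx' n)
  rw [dist_le_zero.1 hyx, dist_self, mul_zero, add_zero] at hy
  exact lt_irrefl _ hy

end Ekeland

section Sandwich

variable {E : Type*} [TopologicalSpace E] [AddCommGroup E] [Module ℝ E] [IsTopologicalAddGroup E]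
  [ContinuousSMul ℝ E]

theorem exists_affine_between_of_concaveOn_le_convexOn {φ ψ : E → ℝ} (hφ : ConvexOn ℝ univ φ)
    (hψ : ConcaveOn ℝ univ ψ) (hψc : Continuous ψ) (hle : ∀ x, ψ x ≤ φ x) :
    ∃ (ℓ : E →L[ℝ] ℝ) (b : ℝ), ∀ x, ψ x ≤ ℓ x + b ∧ ℓ x + b ≤ φ x := by
  have hopen : IsOpen {p : E × ℝ | p.1 ∈ univ ∧ p.2 < ψ p.1} := by
    simpa only [mem_univ, true_and, Function.comp_def] using
      isOpen_lt continuous_snd (hψc.comp continuous_fst)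
  have hdisj : Disjoint {p : E × ℝ | p.1 ∈ univ ∧ p.2 < ψ p.1} {p | p.1 ∈ univ ∧ φ p.1 ≤ p.2} :=
    disjoint_left.2 fun p hp hq => (hp.2.trans_le ((hle p.1).trans hq.2)).false
  obtain ⟨L, u, hhypo, hepi⟩ :=
    geometric_hahn_banach_open hψ.convex_strict_hypograph hopen hφ.convex_epigraph hdisj
  set ℓ₀ := L.comp (ContinuousLinearMap.inl ℝ E ℝ)
  set c := L (0, 1)
  have hL : ∀ x t, L (x, t) = ℓ₀ x + t * c := fun x t => by
    rw [show (x, t) = (x, 0) + t • ((0 : E), (1 : ℝ)) by simp, map_add, map_smul, smul_eq_mul]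
    rfl
  have hhypo' : ∀ x t, t < ψ x → ℓ₀ x + t * c < u := fun x t ht =>
    hL x t ▸ hhypo (x, t) ⟨mem_univ x, ht⟩
  have hepi' : ∀ x, u ≤ ℓ₀ x + φ x * c := fun x => hL x _ ▸ hepi (x, φ x) ⟨mem_univ x, le_rfl⟩
  -- The separating hyperplane is not vertical: it separates `(0, ψ 0 - 1)` from `(0, φ 0)`.
  have hc : 0 < c := by
    have h₁ := hhypo' 0 (ψ 0 - 1) (by linarith)
    nlinarith [hepi' 0, hle 0]
  refine ⟨-c⁻¹ • ℓ₀, u / c, fun x => ?_⟩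
  have hform : (-c⁻¹ • ℓ₀) x + u / c = (u - ℓ₀ x) / c := by
    simp only [smul_apply, smul_eq_mul]
    field_simp
    ring
  rw [hform, le_div_iff₀ hc, div_le_iff₀ hc]
  refine ⟨le_of_forall_pos_lt_add fun δ hδ => ?_, by linarith [hepi' x]⟩
  have hδc : (ψ x - δ / c) * c = ψ x * c - δ := by field_simp
  linarith [hhypo' x (ψ x - δ / c) (by linarith [div_pos hδ hc])]

end Sandwich

theorem ConvexOn.exists_subgradient_norm_le {V : Type*} [NormedAddCommGroup V] [NormedSpace ℝ V]
    {φ : V → ℝ} (hφ : ConvexOn ℝ univ φ) {f : V} {ε : ℝ} (hε : 0 ≤ ε)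
    (hf : ∀ x, φ f ≤ φ x + ε * ‖x - f‖) :
    ∃ ν : V →L[ℝ] ℝ, ‖ν‖ ≤ ε ∧ ∀ g, ν g ≤ φ (f + g) - φ f := by
  have hcone : ConcaveOn ℝ univ fun x => φ f - ε * ‖x - f‖ :=
    ((concaveOn_const (φ f) convex_univ).sub ((convexOn_univ_dist f).smul hε)).congr
      fun x _ => by simp [dist_eq_norm]
  obtain ⟨ℓ, b, hℓ⟩ := exists_affine_between_of_concaveOn_le_convexOn hφ hcone
    (continuous_const.sub (continuous_const.mul (continuous_id.sub continuous_const).norm))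
    fun x => by linarith [hf x]
  have hℓf : ℓ f + b = φ f := le_antisymm (hℓ f).2 (by simpa using (hℓ f).1)
  have hlower : ∀ g, -(ε * ‖g‖) ≤ ℓ g := fun g => by
    have := (hℓ (f + g)).1
    rw [add_sub_cancel_left, map_add] at this
    linarith
  refine ⟨ℓ, ℓ.opNorm_le_bound hε fun g => abs_le.2 ⟨hlower g, ?_⟩, fun g => ?_⟩
  · simpa using hlower (-g)
  · have := (hℓ (f + g)).2
    rw [map_add] at this
    linarith

/-- **Israel's tangent functional approximation theorem.**
Let `V` be a real Banach space and `Λ : V → ℝ` a continuous convex function.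
If `μ₀` is a continuous linear functional bounded by `Λ`, then for every `f₀ ∈ V`
and `ε > 0` there exist a continuous linear functional `μ` and `f ∈ V` such that
`μ` is tangent to `Λ` at `f`, `‖μ - μ₀‖ ≤ ε`, and
`‖f - f₀‖ ≤ (1/ε) * (Λ f₀ - μ₀ f₀ + s)` where `s = sup {μ₀ g - Λ g : g ∈ V}`. -/
theorem israel_tangent_functional_approximation
    {V : Type*} [NormedAddCommGroup V] [NormedSpace ℝ V] [CompleteSpace V]
    (Λ : V → ℝ) (hΛconv : ConvexOn ℝ Set.univ Λ) (hΛcont : Continuous Λ)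
    (μ₀ : V →L[ℝ] ℝ) (hbdd : ∀ g : V, μ₀ g ≤ Λ g)
    (f₀ : V) (ε : ℝ) (hε : 0 < ε) :
    ∃ (μ : V →L[ℝ] ℝ) (f : V),
      (∀ g : V, μ g ≤ Λ (f + g) - Λ f) ∧
      ‖μ - μ₀‖ ≤ ε ∧
      ‖f - f₀‖ ≤ (1 / ε) * (Λ f₀ - μ₀ f₀ + sSup {c : ℝ | ∃ g : V, c = μ₀ g - Λ g}) := by
  set s := sSup {c : ℝ | ∃ g : V, c = μ₀ g - Λ g}
  have hs : ∀ g, μ₀ g - Λ g ≤ s := fun g =>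
    le_csSup ⟨0, by rintro c ⟨g, rfl⟩; linarith [hbdd g]⟩ ⟨g, rfl⟩
  have hbdd_below : BddBelow (range (Λ - ⇑μ₀)) :=
    ⟨-s, by rintro _ ⟨g, rfl⟩; simp only [Pi.sub_apply]; linarith [hs g]⟩
  have hconv : ConvexOn ℝ univ (Λ - ⇑μ₀) := hΛconv.sub (μ₀.toLinearMap.concaveOn convex_univ)
  obtain ⟨f, hf₀, hf⟩ :=
    (hΛcont.sub μ₀.continuous).lowerSemicontinuous.exists_le_add_dist hbdd_below hε f₀
  obtain ⟨ν, hνnorm, hν⟩ :=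
    hconv.exists_subgradient_norm_le hε.le fun x => by simpa only [dist_eq_norm] using hf x
  refine ⟨μ₀ + ν, f, fun g => ?_, by simpa using hνnorm, ?_⟩
  · have := hν g
    simp only [Pi.sub_apply, map_add] at this
    simp only [add_apply]
    linarith
  · simp only [Pi.sub_apply, dist_eq_norm] at hf₀
    rw [one_div, ← div_eq_inv_mul, le_div_iff₀ hε]
    linarith [hs f]
end

section
/- Suppose 𝒢 ⊆ X × (0,∞) satisfies weak controlled specification at scale η > 0 with gap function h_η. Then for any bi-infinite sequence of orbit segments (x_i, t_i)_{i∈ℤ} in 𝒢 there exist a point y ∈ X and a sequence (h_i)_{i∈ℤ} with h_i ∈ [0, max{h_η(t_i), h_η(t_{i+1})}] such that, setting m_0 = 0, m_i = Σ_{j=0}^{i−1}(t_j + h_j) for i > 0, and m_{−i} = −Σ_{j=−i}^{−1}(t_j + h_j) for i > 0, one has d_{t_i}(x_i, f_{m_i}(y)) ≤ η for all i ∈ ℤ. -/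
/-!
For every `N`, specification applied to the finitely many segments with indices `-N, …, N + 1`
yields a point together with transition times whose orbit `η`-shadows the segments `-N, …, N`.
A pair (point, transition times) lives in the compact space
`X × ∏ i, [0, max (hgap (t i)) (hgap (t (i + 1)))]`, and shadowing a fixed finite window is a
closed condition there (the strict inequality relaxes to `≤`). The resulting nested nonempty
compact sets have a common point, which shadows every segment.
-/

open Finset

section IntPartialSum

variable {M : Type*} [AddCommGroup M]

/-- For `a = t + h` these are the starting times `m i` of the segments in the shadowing orbit. -/
noncomputable def intPartialSum (a : ℤ → M) (i : ℤ) : M :=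
  ∑ j ∈ Ico 0 i, a j - ∑ j ∈ Ico i 0, a j

@[simp]
lemma intPartialSum_zero (a : ℤ → M) : intPartialSum a 0 = 0 := by
  simp [intPartialSum]

lemma intPartialSum_add_one (a : ℤ → M) (i : ℤ) :
    intPartialSum a (i + 1) = intPartialSum a i + a i := by
  rcases le_or_gt 0 i with hi | hi
  · rw [intPartialSum, intPartialSum, ← insert_Ico_right_eq_Ico_add_one hi,
      sum_insert (by simp), Ico_eq_empty_of_le hi,
      Ico_eq_empty_of_le (show (0 : ℤ) ≤ i + 1 by omega)]
    abel
  · rw [intPartialSum, intPartialSum, ← insert_Ico_add_one_left_eq_Ico hi,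
      sum_insert (by simp), Ico_eq_empty_of_le hi.le,
      Ico_eq_empty_of_le (show i + 1 ≤ 0 by omega)]
    abel

lemma intPartialSum_add_natCast_sub (a : ℤ → M) (k : ℤ) (n : ℕ) :
    intPartialSum a (k + n) - intPartialSum a k = ∑ j ∈ range n, a (k + j) := by
  induction n with
  | zero => simp
  | succ n ih =>
    rw [sum_range_succ, ← ih, Nat.cast_succ, ← add_assoc, intPartialSum_add_one]
    abel

lemma continuous_intPartialSum [TopologicalSpace M] [IsTopologicalAddGroup M] (i : ℤ) :
    Continuous fun a : ℤ → M => intPartialSum a i := by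
  unfold intPartialSum
  fun_prop

end IntPartialSum

section Specification

variable {X : Type*} [MetricSpace X] (f : ℝ → X → X)

def HasWeakControlledSpecification (η : ℝ) (hgap : ℝ → ℝ) (𝒢 : Set (X × ℝ)) : Prop :=
  ∀ n : ℕ, 2 ≤ n → ∀ x : ℕ → X, ∀ t : ℕ → ℝ,
    (∀ i < n, (x i, t i) ∈ 𝒢) →
    ∃ τ : ℕ → ℝ,
      (∀ i : ℕ, i + 1 < n → 0 ≤ τ i ∧ τ i ≤ max (hgap (t i)) (hgap (t (i + 1)))) ∧
      ∃ y : X, ∀ i < n, ∀ s ∈ Set.Icc (0 : ℝ) (t i),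
        dist (f s (f (∑ j ∈ range i, (t j + τ j)) y)) (f s (x i)) < η

def admissibleGaps (hgap : ℝ → ℝ) (t : ℤ → ℝ) : Set (ℤ → ℝ) :=
  Set.univ.pi fun i => Set.Icc 0 (max (hgap (t i)) (hgap (t (i + 1))))

/-- A point `p = (y, h)` consists of the shadowing point `y` and the transition times `h`. -/
def shadowingSet (η : ℝ) (x : ℤ → X) (t : ℤ → ℝ) (I : Set ℤ) : Set (X × (ℤ → ℝ)) :=
  {p | ∀ i ∈ I, ∀ s ∈ Set.Icc 0 (t i),
    dist (f s (x i)) (f s (f (intPartialSum (t + p.2) i) p.1)) ≤ η}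

variable {f}

lemma shadowingSet_anti {η : ℝ} {x : ℤ → X} {t : ℤ → ℝ} {I J : Set ℤ} (hIJ : I ⊆ J) :
    shadowingSet f η x t J ⊆ shadowingSet f η x t I :=
  fun _ hp i hi => hp i (hIJ hi)

lemma isClosed_shadowingSet (hflow : Continuous fun p : ℝ × X => f p.1 p.2)
    (η : ℝ) (x : ℤ → X) (t : ℤ → ℝ) (I : Set ℤ) : IsClosed (shadowingSet f η x t I) := by
  have hf : ∀ s, Continuous (f s) := fun s => hflow.comp (Continuous.prodMk_right s)
  have hm : ∀ i, Continuous fun p : X × (ℤ → ℝ) => intPartialSum (t + p.2) i := fun i =>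
    (continuous_intPartialSum i).comp (continuous_const.add continuous_snd)
  simp only [shadowingSet, Set.ofPred_forall]
  exact isClosed_biInter fun i _ => isClosed_biInter fun s _ => isClosed_le
    (continuous_const.dist ((hf s).comp (hflow.comp ((hm i).prodMk continuous_fst))))
    continuous_const

lemma exists_mem_shadowingSet_Icc (hfadd : ∀ s t : ℝ, f (s + t) = f s ∘ f t)
    {η : ℝ} {hgap : ℝ → ℝ} {𝒢 : Set (X × ℝ)} (hspec : HasWeakControlledSpecification f η hgap 𝒢)
    {x : ℤ → X} {t : ℤ → ℝ} (hxt : ∀ i, (x i, t i) ∈ 𝒢)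
    (hgap_nonneg : ∀ i, 0 ≤ max (hgap (t i)) (hgap (t (i + 1)))) (N : ℕ) :
    ∃ p ∈ shadowingSet f η x t (Set.Icc (-N) N), p.2 ∈ admissibleGaps hgap t := by
  -- the orbit of `y` starts at segment `-N`, so the shadowing point is `y` pushed to segment `0`
  obtain ⟨τ, hτ, y, hy⟩ := hspec (2 * N + 2) (by omega) (fun j => x (-N + j))
    (fun j => t (-N + j)) (fun j _ => hxt _)
  let h : ℤ → ℝ := fun i => if -(N : ℤ) ≤ i ∧ i ≤ N then τ (i + N).toNat else 0
  have hτh : ∀ j ≤ 2 * N, h (-N + j) = τ j := by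
    intro j hj
    simp only [h]
    rw [if_pos (by omega)]
    congr
    omega
  have hsum : ∀ j ≤ 2 * N + 1, ∑ l ∈ range j, (t (-N + l) + τ l) =
      intPartialSum (t + h) (-N + j) - intPartialSum (t + h) (-N) := by
    intro j hj
    rw [intPartialSum_add_natCast_sub]
    refine sum_congr rfl fun l hl => ?_
    rw [Pi.add_apply, hτh l (by simp at hl; omega)]
  have hshift : ∀ i, f (intPartialSum (t + h) i) (f (-intPartialSum (t + h) (-N)) y) =
      f (intPartialSum (t + h) i - intPartialSum (t + h) (-N)) y := by
    intro i
    rw [sub_eq_add_neg, hfadd]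
    rfl
  refine ⟨(f (∑ l ∈ range N, (t (-N + l) + τ l)) y, h), ?_, ?_⟩
  · rintro i ⟨hi₁, hi₂⟩ s hs
    obtain ⟨j, rfl⟩ : ∃ j : ℕ, i = -N + j := ⟨(i + N).toNat, by omega⟩
    have := hy j (by omega) s hs
    rw [hsum j (by omega), dist_comm] at this
    rw [hsum N (by omega), neg_add_cancel, intPartialSum_zero, zero_sub]
    exact (hshift _ ▸ this).le
  · intro i _
    show h i ∈ _
    by_cases hi : -(N : ℤ) ≤ i ∧ i ≤ N
    · obtain ⟨j, rfl⟩ : ∃ j : ℕ, i = -N + j := ⟨(i + N).toNat, by omega⟩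
      have := hτ j (by omega)
      push_cast at this
      rw [← add_assoc] at this
      rwa [hτh j (by omega)]
    · simp only [h, if_neg hi]
      exact ⟨le_rfl, hgap_nonneg i⟩

end Specification

theorem biinfinite_specification_general
    {X : Type*} [MetricSpace X] [CompactSpace X]
    (f : ℝ → X → X)
    (hflow : Continuous fun p : ℝ × X => f p.1 p.2)
    (hfadd : ∀ s t : ℝ, f (s + t) = f s ∘ f t)
    (η : ℝ)
    (hgap : ℝ → ℝ)
    (hgap_one : ∀ t : ℝ, 0 < t → 1 ≤ hgap t)
    (𝒢 : Set (X × ℝ)) (h𝒢pos : ∀ p ∈ 𝒢, 0 < p.2)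
    (hspec : ∀ n : ℕ, 2 ≤ n → ∀ x : ℕ → X, ∀ t : ℕ → ℝ,
      (∀ i < n, (x i, t i) ∈ 𝒢) →
      ∃ τ : ℕ → ℝ,
        (∀ i : ℕ, i + 1 < n → 0 ≤ τ i ∧ τ i ≤ max (hgap (t i)) (hgap (t (i + 1)))) ∧
        ∃ y : X, ∀ i < n, ∀ s ∈ Set.Icc (0 : ℝ) (t i),
          dist (f s (f (∑ j ∈ Finset.range i, (t j + τ j)) y)) (f s (x i)) < η)
    (x : ℤ → X) (t : ℤ → ℝ) (hxt : ∀ i : ℤ, (x i, t i) ∈ 𝒢) :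
    ∃ (y : X) (h : ℤ → ℝ) (m : ℤ → ℝ),
      (∀ i : ℤ, h i ∈ Set.Icc (0 : ℝ) (max (hgap (t i)) (hgap (t (i + 1))))) ∧
      m 0 = 0 ∧ (∀ i : ℤ, m (i + 1) = m i + t i + h i) ∧
      ∀ i : ℤ, ∀ s ∈ Set.Icc (0 : ℝ) (t i),
        dist (f s (x i)) (f s (f (m i) y)) ≤ η := by
  have hgap_nonneg : ∀ i, 0 ≤ max (hgap (t i)) (hgap (t (i + 1))) := fun i =>
    zero_le_one.trans <| (hgap_one _ (h𝒢pos _ (hxt i))).trans (le_max_left _ _)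
  have hK : IsCompact ((Set.univ : Set X) ×ˢ admissibleGaps hgap t) :=
    isCompact_univ.prod (isCompact_univ_pi fun _ => isCompact_Icc)
  let C : ℕ → Set (X × (ℤ → ℝ)) := fun N =>
    (Set.univ ×ˢ admissibleGaps hgap t) ∩ shadowingSet f η x t (Set.Icc (-N) N)
  have hC_anti : ∀ N, C (N + 1) ⊆ C N := fun N => Set.inter_subset_inter_right _
    (shadowingSet_anti (Set.Icc_subset_Icc (by push_cast; omega) (by push_cast; omega)))
  have hC_nonempty : ∀ N, (C N).Nonempty := fun N =>
    let ⟨p, hp, hp'⟩ := exists_mem_shadowingSet_Icc hfadd hspec hxt hgap_nonneg N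
    ⟨p, ⟨trivial, hp'⟩, hp⟩
  obtain ⟨⟨y, h⟩, hyh⟩ := IsCompact.nonempty_iInter_of_sequence_nonempty_isCompact_isClosed C
    hC_anti hC_nonempty (hK.inter_right (isClosed_shadowingSet hflow ..))
    (fun N => hK.isClosed.inter (isClosed_shadowingSet hflow ..))
  rw [Set.mem_iInter] at hyh
  refine ⟨y, h, intPartialSum (t + h), fun i => (hyh 0).1.2 i trivial, intPartialSum_zero _,
    fun i => by rw [intPartialSum_add_one, Pi.add_apply, add_assoc], fun i => (hyh i.natAbs).2 i ?_⟩
  exact ⟨by omega, by omega⟩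

/-- **Bi-infinite specification.** If `𝒢 ⊆ X × (0,∞)` satisfies weak controlled
specification at scale `η` with gap function `hgap`, then for every bi-infinite
sequence of orbit segments `(x i, t i)` from `𝒢` there are a point `y`, transition
times `h i ∈ [0, max (hgap (t i)) (hgap (t (i+1)))]`, and times `m : ℤ → ℝ` with
`m 0 = 0` and `m (i+1) = m i + t i + h i`, such that the orbit of `y` shadows each
segment: `d_{t i}(x i, f_{m i}(y)) ≤ η` for all `i ∈ ℤ`. -/
theorem biinfinite_specification
    {X : Type*} [MetricSpace X] [CompactSpace X] [Nonempty X]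
    (f : ℝ → X → X)
    (hflow : Continuous fun p : ℝ × X => f p.1 p.2)
    (hf0 : f 0 = id) (hfadd : ∀ s t : ℝ, f (s + t) = f s ∘ f t)
    (η : ℝ) (hη : 0 < η)
    (hgap : ℝ → ℝ) (hgap_mono : MonotoneOn hgap (Set.Ioi (0 : ℝ)))
    (hgap_one : ∀ t : ℝ, 0 < t → 1 ≤ hgap t)
    (𝒢 : Set (X × ℝ)) (h𝒢pos : ∀ p ∈ 𝒢, 0 < p.2)
    (hspec : ∀ n : ℕ, 2 ≤ n → ∀ x : ℕ → X, ∀ t : ℕ → ℝ,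
      (∀ i < n, (x i, t i) ∈ 𝒢) →
      ∃ τ : ℕ → ℝ,
        (∀ i : ℕ, i + 1 < n → 0 ≤ τ i ∧ τ i ≤ max (hgap (t i)) (hgap (t (i + 1)))) ∧
        ∃ y : X, ∀ i < n, ∀ s ∈ Set.Icc (0 : ℝ) (t i),
          dist (f s (f (∑ j ∈ Finset.range i, (t j + τ j)) y)) (f s (x i)) < η)
    (x : ℤ → X) (t : ℤ → ℝ) (hxt : ∀ i : ℤ, (x i, t i) ∈ 𝒢) :
    ∃ (y : X) (h : ℤ → ℝ) (m : ℤ → ℝ),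
      (∀ i : ℤ, h i ∈ Set.Icc (0 : ℝ) (max (hgap (t i)) (hgap (t (i + 1))))) ∧
      m 0 = 0 ∧ (∀ i : ℤ, m (i + 1) = m i + t i + h i) ∧
      ∀ i : ℤ, ∀ s ∈ Set.Icc (0 : ℝ) (t i),
        dist (f s (x i)) (f s (f (m i) y)) ≤ η :=
  biinfinite_specification_general f hflow hfadd η hgap hgap_one 𝒢 h𝒢pos hspec x t hxt
end

section
/- Let φ, g ∈ C(X,ℝ). Let (ε_n)_{n∈ℕ} be a sequence of positive reals with ε_n → 0, and for each n let μ_n ∈ M_max(φ + ε_n g). If (μ_n) converges to μ in the weak-* topology, then μ ∈ M_max(φ) and ∫g dμ = max{∫g dν : ν ∈ M_max(φ)}. -/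
/-!
Write `I ν = ∫ φ dν` and `J ν = ∫ g dν`; both are weak-* continuous, and the invariant measures
form a closed set since every `f t` is continuous. Maximality of `μₙ` against an invariant `ν`
gives `I ν - I μₙ ≤ εₙ (J μₙ - J ν)`, which tends to `0`, so `μ` maximizes `I`. If `ν` maximizes
`I` as well, then `I μₙ ≤ I ν`, and dividing by `εₙ > 0` leaves `J ν ≤ J μₙ → J μ`.
-/

open MeasureTheory

variable {X : Type*} [MetricSpace X] [CompactSpace X] [Nonempty X]
  [MeasurableSpace X] [BorelSpace X]

/-- The set of `F`-invariant Borel probability measures on `X`. -/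
def MF (f : ℝ → X → X) : Set (ProbabilityMeasure X) :=
  {μ | ∀ t : ℝ, (μ : Measure X).map (f t) = (μ : Measure X)}

/-- The maximum ergodic average functional `Λ_F`. -/
noncomputable def LamF (f : ℝ → X → X) (φ : C(X, ℝ)) : ℝ :=
  sSup {a : ℝ | ∃ μ ∈ MF f, a = ∫ x, φ x ∂(μ : Measure X)}

/-- The set of `φ`-maximizing invariant measures. -/
def Mmax (f : ℝ → X → X) (φ : C(X, ℝ)) : Set (ProbabilityMeasure X) :=
  {μ | μ ∈ MF f ∧ ∫ x, φ x ∂(μ : Measure X) = LamF f φ}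

/-- The set of ergodic `F`-invariant Borel probability measures. -/
def MFe (f : ℝ → X → X) : Set (ProbabilityMeasure X) :=
  {μ | μ ∈ MF f ∧ ∀ A : Set X, MeasurableSet A → (∀ t : ℝ, f t ⁻¹' A = A) →
    (μ : Measure X) A = 0 ∨ (μ : Measure X) A = 1}

open Filter Topology ProbabilityMeasure

section PerturbedMaximizers

variable {P ι : Type*} [TopologicalSpace P] {S : Set P} {I J : P → ℝ} {ε : ι → ℝ}
  {l : Filter ι} {μs : ι → P} {μ : P}

theorem isMaxOn_of_tendsto_of_isMaxOn_add_smul [l.NeBot] (hI : Continuous I) (hJ : Continuous J)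
    (hε : Tendsto ε l (𝓝 0)) (hmax : ∀ i, IsMaxOn (I + ε i • J) S (μs i))
    (hμ : Tendsto μs l (𝓝 μ)) : IsMaxOn I S μ := by
  intro ν hν
  have hle : ∀ i, I ν + ε i * (J ν - J (μs i)) ≤ I (μs i) := fun i => by
    have hpert := isMaxOn_iff.mp (hmax i) ν hν
    simp only [Pi.add_apply, Pi.smul_apply, smul_eq_mul] at hpert
    linarith
  have hlim : Tendsto (fun i => I ν + ε i * (J ν - J (μs i))) l (𝓝 (I ν + 0 * (J ν - J μ))) :=
    tendsto_const_nhds.add (hε.mul (tendsto_const_nhds.sub ((hJ.tendsto μ).comp hμ)))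
  rw [zero_mul, add_zero] at hlim
  exact le_of_tendsto_of_tendsto' hlim ((hI.tendsto μ).comp hμ) hle

theorem le_of_tendsto_of_isMaxOn_add_smul [l.NeBot] (hJ : Continuous J) (hεpos : ∀ i, 0 < ε i)
    (hS : ∀ i, μs i ∈ S) (hmax : ∀ i, IsMaxOn (I + ε i • J) S (μs i))
    (hμ : Tendsto μs l (𝓝 μ)) {ν : P} (hνS : ν ∈ S) (hν : IsMaxOn I S ν) : J ν ≤ J μ := by
  refine ge_of_tendsto' ((hJ.tendsto μ).comp hμ) fun i => ?_
  have hpert := isMaxOn_iff.mp (hmax i) ν hνS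
  have hI := isMaxOn_iff.mp hν (μs i) (hS i)
  simp only [Pi.add_apply, Pi.smul_apply, smul_eq_mul] at hpert
  exact le_of_mul_le_mul_left (show ε i * J ν ≤ ε i * J (μs i) by linarith) (hεpos i)

end PerturbedMaximizers

theorem ContinuousMap.integral_add_smul {Y : Type*} [TopologicalSpace Y] [CompactSpace Y]
    [MeasurableSpace Y] [OpensMeasurableSpace Y] (φ g : C(Y, ℝ)) (c : ℝ) (ν : Measure Y)
    [IsFiniteMeasure ν] : ∫ x, (φ + c • g) x ∂ν = ∫ x, φ x ∂ν + c * ∫ x, g x ∂ν := by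
  have hint : ∀ ψ : C(Y, ℝ), Integrable ψ ν := fun ψ =>
    (BoundedContinuousFunction.mkOfCompact ψ).integrable ν
  simp only [ContinuousMap.add_apply, ContinuousMap.smul_apply, smul_eq_mul]
  rw [integral_add (hint φ) ((hint g).const_mul c), integral_const_mul]

theorem isClosed_MF {Y : Type*} [TopologicalSpace Y] [MeasurableSpace Y] [BorelSpace Y]
    [HasOuterApproxClosed Y] {f : ℝ → Y → Y} (hf : ∀ t, Continuous (f t)) : IsClosed (MF f) := by
  have hMF : MF f = ⋂ t, {μ | μ.map (hf t).measurable.aemeasurable = μ} := by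
    ext μ
    simp only [MF, Set.mem_iInter, Set.mem_ofPred_eq,
      ← ProbabilityMeasure.toMeasure_injective.eq_iff, ProbabilityMeasure.toMeasure_map]
  rw [hMF]
  exact isClosed_iInter fun t => isClosed_eq (ProbabilityMeasure.continuous_map (hf t)) continuous_id

theorem mem_Mmax_iff {Y : Type*} [MetricSpace Y] [CompactSpace Y] [MeasurableSpace Y]
    [OpensMeasurableSpace Y] {f : ℝ → Y → Y} {ψ : C(Y, ℝ)} {μ : ProbabilityMeasure Y} :
    μ ∈ Mmax f ψ ↔
      μ ∈ MF f ∧ IsMaxOn (fun ν : ProbabilityMeasure Y => ∫ x, ψ x ∂(ν : Measure Y)) (MF f) μ := by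
  have hbdd : BddAbove {a : ℝ | ∃ ν ∈ MF f, a = ∫ x, ψ x ∂(ν : Measure Y)} := by
    refine ((BoundedContinuousFunction.mkOfCompact ψ).isBounded_range_integral
      (fun ν : ProbabilityMeasure Y => (ν : Measure Y))).bddAbove.mono ?_
    rintro _ ⟨ν, -, rfl⟩
    exact ⟨ν, rfl⟩
  refine and_congr_right fun hμ => ⟨fun hmax => isMaxOn_iff.mpr fun ν hν => ?_, fun hmax => ?_⟩
  · exact hmax ▸ le_csSup hbdd ⟨ν, hν, rfl⟩
  · refine le_antisymm (le_csSup hbdd ⟨μ, hμ, rfl⟩) (csSup_le ⟨_, μ, hμ, rfl⟩ ?_)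
    rintro _ ⟨ν, hν, rfl⟩
    exact isMaxOn_iff.mp hmax ν hν

theorem perturbed_maximizing_limit_general
    (f : ℝ → X → X)
    (hflow : Continuous fun p : ℝ × X => f p.1 p.2)
    (φ g : C(X, ℝ)) (ε : ℕ → ℝ) (hεpos : ∀ n : ℕ, 0 < ε n)
    (hε0 : Filter.Tendsto ε Filter.atTop (nhds 0))
    (μn : ℕ → ProbabilityMeasure X) (hμn : ∀ n : ℕ, μn n ∈ Mmax f (φ + ε n • g))
    (μ : ProbabilityMeasure X) (hμ : Filter.Tendsto μn Filter.atTop (nhds μ)) :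
    μ ∈ Mmax f φ ∧
    IsGreatest {a : ℝ | ∃ ν ∈ Mmax f φ, a = ∫ x, g x ∂(ν : Measure X)}
      (∫ x, g x ∂(μ : Measure X)) := by
  have hMF : IsClosed (MF f) := isClosed_MF fun t => hflow.comp (Continuous.prodMk_right t)
  have hμnMF n : μn n ∈ MF f := (hμn n).1
  have hmax n : IsMaxOn ((fun ν : ProbabilityMeasure X => ∫ x, φ x ∂(ν : Measure X)) +
      ε n • fun ν : ProbabilityMeasure X => ∫ x, g x ∂(ν : Measure X)) (MF f) (μn n) := by
    have hpert := (mem_Mmax_iff.mp (hμn n)).2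
    simp only [ContinuousMap.integral_add_smul] at hpert
    exact hpert
  have hμmax : μ ∈ Mmax f φ := mem_Mmax_iff.mpr
    ⟨hMF.mem_of_tendsto hμ (Eventually.of_forall hμnMF),
      isMaxOn_of_tendsto_of_isMaxOn_add_smul (continuous_integral_continuousMap φ)
        (continuous_integral_continuousMap g) hε0 hmax hμ⟩
  refine ⟨hμmax, ⟨μ, hμmax, rfl⟩, ?_⟩
  rintro _ ⟨ν, hν, rfl⟩
  exact le_of_tendsto_of_isMaxOn_add_smul (continuous_integral_continuousMap g)
    hεpos hμnMF hmax hμ (mem_Mmax_iff.mp hν).1 (mem_Mmax_iff.mp hν).2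

/-- If `ε_n ↓ 0`, `μ_n` maximizes `φ + ε_n g`, and `μ_n → μ` weak-*, then `μ`
maximizes `φ` and `∫ g dμ` is the maximum of `∫ g dν` over `ν ∈ M_max(φ)`. -/
theorem perturbed_maximizing_limit
    (f : ℝ → X → X)
    (hflow : Continuous fun p : ℝ × X => f p.1 p.2)
    (hf0 : f 0 = id) (hfadd : ∀ s t : ℝ, f (s + t) = f s ∘ f t)
    (φ g : C(X, ℝ)) (ε : ℕ → ℝ) (hεpos : ∀ n : ℕ, 0 < ε n)
    (hε0 : Filter.Tendsto ε Filter.atTop (nhds 0))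
    (μn : ℕ → ProbabilityMeasure X) (hμn : ∀ n : ℕ, μn n ∈ Mmax f (φ + ε n • g))
    (μ : ProbabilityMeasure X) (hμ : Filter.Tendsto μn Filter.atTop (nhds μ)) :
    μ ∈ Mmax f φ ∧
    IsGreatest {a : ℝ | ∃ ν ∈ Mmax f φ, a = ∫ x, g x ∂(ν : Measure X)}
      (∫ x, g x ∂(μ : Measure X)) :=
  perturbed_maximizing_limit_general f hflow φ g ε hεpos hε0 μn hμn μ hμ
end

section
/- Let φ, g ∈ C(X,ℝ) and δ > 0. Then there exists ε₀ > 0 such that for all ε with 0 < ε < ε₀ and all μ, ν ∈ M_max(φ + εg), one has |∫g dμ − ∫g dν| < δ. In particular, the interval {∫g dμ : μ ∈ M_max(φ + εg)} converges to a singleton as ε ↓ 0. -/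
open MeasureTheory

variable {X : Type*} [MetricSpace X] [CompactSpace X] [Nonempty X]
  [MeasurableSpace X] [BorelSpace X]

/-- Continuous functions are integrable against any probability measure on a
compact space. -/
lemma cm_integrable (ψ : C(X, ℝ)) (μ : ProbabilityMeasure X) :
    Integrable (fun x => ψ x) (μ : Measure X) :=
  ψ.continuous.integrable_of_hasCompactSupport (HasCompactSupport.of_compactSpace _)

/-- The integral of a continuous function against a probability measure is bounded
in absolute value by its sup norm. -/
lemma cm_integral_abs_le (ψ : C(X, ℝ)) (μ : ProbabilityMeasure X) :
    |∫ x, ψ x ∂(μ : Measure X)| ≤ ‖ψ‖ := by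
  have := norm_integral_le_of_norm_le_const (μ := (μ : Measure X))
    (f := fun x => ψ x) (C := ‖ψ‖) (Filter.Eventually.of_forall fun x => ψ.norm_coe_le_norm x)
  simpa using this

/-- The set defining `LamF` is bounded above. -/
lemma lamF_bddAbove (f : ℝ → X → X) (ψ : C(X, ℝ)) :
    BddAbove {a : ℝ | ∃ μ ∈ MF f, a = ∫ x, ψ x ∂(μ : Measure X)} := by
  refine ⟨‖ψ‖, fun a ha => ?_⟩
  obtain ⟨μ, -, rfl⟩ := ha
  exact (abs_le.mp (cm_integral_abs_le ψ μ)).2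

/-- Any invariant measure's integral is at most `LamF`. -/
lemma integral_le_lamF (f : ℝ → X → X) (ψ : C(X, ℝ)) {μ : ProbabilityMeasure X}
    (hμ : μ ∈ MF f) : ∫ x, ψ x ∂(μ : Measure X) ≤ LamF f ψ :=
  le_csSup (lamF_bddAbove f ψ) ⟨μ, hμ, rfl⟩

/-- Integral of `φ + ε • g` splits linearly. -/
lemma integral_add_smul (φ g : C(X, ℝ)) (ε : ℝ) (μ : ProbabilityMeasure X) :
    ∫ x, (φ + ε • g) x ∂(μ : Measure X)
      = (∫ x, φ x ∂(μ : Measure X)) + ε * ∫ x, g x ∂(μ : Measure X) := by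
  have h1 : (fun x => (φ + ε • g) x) = fun x => φ x + ε * g x := by
    funext x; simp
  rw [h1, integral_add (cm_integrable φ μ) (by simpa using (cm_integrable g μ).const_mul ε),
    integral_const_mul]

/-- For `φ, g ∈ C(X, ℝ)` and `δ > 0`, for all sufficiently small `ε > 0` any two
maximizing measures of `φ + ε g` give `g`-integrals that differ by less than `δ`;
i.e. the interval `{∫ g dμ : μ ∈ M_max(φ + ε g)}` shrinks to a point as `ε ↓ 0`. -/
theorem perturbed_maximizing_interval_small
    (f : ℝ → X → X)
    (hflow : Continuous fun p : ℝ × X => f p.1 p.2)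
    (hf0 : f 0 = id) (hfadd : ∀ s t : ℝ, f (s + t) = f s ∘ f t)
    (φ g : C(X, ℝ)) (δ : ℝ) (hδ : 0 < δ) :
    ∃ ε₀ : ℝ, 0 < ε₀ ∧ ∀ ε : ℝ, 0 < ε → ε < ε₀ →
      ∀ μ ∈ Mmax f (φ + ε • g), ∀ ν ∈ Mmax f (φ + ε • g),
        |∫ x, g x ∂(μ : Measure X) - ∫ x, g x ∂(ν : Measure X)| < δ := by
  by_cases hMF : (MF f).Nonempty
  swap
  · exact ⟨1, one_pos, fun ε _ _ μ hμ => absurd ⟨μ, hμ.1⟩ hMF⟩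
  set h : ℝ → ℝ := fun ε => LamF f (φ + ε • g) with hh
  -- lower bound: h ε ≥ h 0 - ε * ‖g‖ for ε ≥ 0... we show the slope set is bdd below
  set Q : Set ℝ := {q | ∃ ε : ℝ, 0 < ε ∧ q = (h ε - LamF f φ) / ε} with hQ
  have hslope_lb : ∀ ε : ℝ, 0 < ε → LamF f φ - ε * ‖g‖ ≤ h ε := by
    intro ε hε
    obtain ⟨ν₀, hν₀⟩ := hMF
    have hne : {a : ℝ | ∃ μ ∈ MF f, a = ∫ x, φ x ∂(μ : Measure X)}.Nonempty :=
      ⟨_, ν₀, hν₀, rfl⟩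
    rw [sub_le_iff_le_add]
    show sSup _ ≤ _
    refine csSup_le hne ?_
    rintro a ⟨μ, hμ, rfl⟩
    have h1 : ∫ x, (φ + ε • g) x ∂(μ : Measure X) ≤ h ε := integral_le_lamF f _ hμ
    rw [integral_add_smul] at h1
    have h2 : -‖g‖ ≤ ∫ x, g x ∂(μ : Measure X) := (abs_le.mp (cm_integral_abs_le g μ)).1
    nlinarith
  have hQbdd : BddBelow Q := by
    refine ⟨-‖g‖, ?_⟩
    rintro q ⟨ε, hε, rfl⟩
    rw [le_div_iff₀ hε]
    have := hslope_lb ε hε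
    nlinarith
  have hQne : Q.Nonempty := ⟨(h 1 - LamF f φ) / 1, 1, one_pos, rfl⟩
  set L : ℝ := sInf Q with hL
  -- choose ε₁ with slope close to L
  obtain ⟨q₁, ⟨ε₁, hε₁, rfl⟩, hq₁⟩ := Real.lt_sInf_add_pos hQne (half_pos hδ)
  refine ⟨ε₁ / 2, by positivity, ?_⟩
  intro ε hε hεlt
  -- the common bound: any maximizer's g-integral lies in [L, L + δ)
  have key : ∀ μ ∈ Mmax f (φ + ε • g),
      L ≤ ∫ x, g x ∂(μ : Measure X) ∧ ∫ x, g x ∂(μ : Measure X) < L + δ := by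
    rintro μ ⟨hμ, hmax⟩
    set s := ∫ x, g x ∂(μ : Measure X) with hs
    set Iφ := ∫ x, φ x ∂(μ : Measure X) with hIφ
    have hεint : Iφ + ε * s = h ε := by
      show Iφ + ε * s = LamF f (φ + ε • g)
      rw [← hmax, integral_add_smul]
    have h0 : Iφ ≤ LamF f φ := integral_le_lamF f φ hμ
    have hε₁int : Iφ + ε₁ * s ≤ h ε₁ := by
      have := integral_le_lamF f (φ + ε₁ • g) hμ
      rwa [integral_add_smul] at this
    -- slope at ε is ≥ L, i.e. h ε - LamF f φ ≥ L * ε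
    have hQε : (h ε - LamF f φ) / ε ∈ Q := ⟨ε, hε, rfl⟩
    have hLε : L * ε ≤ h ε - LamF f φ := by
      have := csInf_le hQbdd hQε
      rw [← hL] at this
      calc L * ε ≤ ((h ε - LamF f φ) / ε) * ε := by nlinarith
        _ = h ε - LamF f φ := by field_simp
    -- slope at ε₁ is < L + δ/2
    have hLε₁ : h ε₁ - LamF f φ < (L + δ / 2) * ε₁ := by
      rw [div_lt_iff₀ hε₁] at hq₁
      linarith [hq₁]
    constructor
    · -- s ≥ (h ε - LamF f φ)/ε ≥ L
      nlinarith
    · -- s < L + δ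
      have h1 : (ε₁ - ε) * s ≤ h ε₁ - h ε := by nlinarith
      have h2 : h ε - LamF f φ ≥ L * ε := hLε
      have h3 : ε₁ - ε > ε₁ / 2 := by linarith
      nlinarith
  intro μ hμ ν hν
  obtain ⟨h1, h2⟩ := key μ hμ
  obtain ⟨h3, h4⟩ := key ν hν
  rw [abs_sub_lt_iff]
  constructor <;> linarith
end

section
/- If a continuous linear functional μ ∈ C(X,ℝ)* is tangent to Λ_F at φ ∈ C(X,ℝ), then μ is flow-invariant as a functional: μ(ψ − ψ ∘ f_t) = 0 for every ψ ∈ C(X,ℝ) and every t ∈ ℝ. -/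
open MeasureTheory

variable {X : Type*} [MetricSpace X] [CompactSpace X] [Nonempty X]
  [MeasurableSpace X] [BorelSpace X]

/-! A coboundary `χ = ψ - ψ ∘ f_t` integrates to zero against every invariant measure, so adding
`±χ` does not change `Λ_F`. Tangency then gives `L χ ≤ 0` and `-L χ ≤ 0`. -/

lemma integral_sub_comp_eq_zero_of_map_eq {Y : Type*} [TopologicalSpace Y] [CompactSpace Y]
    [MeasurableSpace Y] [BorelSpace Y] {μ : Measure Y} [IsFiniteMeasure μ]
    (ψ : C(Y, ℝ)) (g : C(Y, Y)) (hg : μ.map g = μ) :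
    ∫ y, (ψ - ψ.comp g) y ∂μ = 0 := by
  have hψ : Integrable ψ μ := ψ.continuous.integrable_of_hasCompactSupport (.of_compactSpace _)
  have hψg : Integrable (ψ.comp g) μ :=
    (ψ.comp g).continuous.integrable_of_hasCompactSupport (.of_compactSpace _)
  have hinv : ∫ y, ψ (g y) ∂μ = ∫ y, ψ y ∂μ := by
    rw [← integral_map g.continuous.aemeasurable ψ.continuous.aestronglyMeasurable, hg]
  rw [ContinuousMap.coe_sub, integral_sub' hψ hψg, ContinuousMap.coe_comp, Function.comp_def, hinv,
    sub_self]

omit [Nonempty X] in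
lemma LamF_add_eq_of_forall_integral_eq_zero (f : ℝ → X → X) (φ χ : C(X, ℝ))
    (hχ : ∀ μ ∈ MF f, ∫ x, χ x ∂(μ : Measure X) = 0) :
    LamF f (φ + χ) = LamF f φ := by
  unfold LamF
  congr 1
  ext a
  refine exists_congr fun μ => and_congr_right fun hμ => ?_
  have hφ : Integrable φ (μ : Measure X) :=
    φ.continuous.integrable_of_hasCompactSupport (.of_compactSpace _)
  have hχ' : Integrable χ (μ : Measure X) :=
    χ.continuous.integrable_of_hasCompactSupport (.of_compactSpace _)
  rw [ContinuousMap.coe_add, integral_add' hφ hχ', hχ μ hμ, add_zero]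

omit [Nonempty X] in
lemma tangent_eq_zero_of_forall_integral_eq_zero (f : ℝ → X → X)
    (L : C(X, ℝ) →L[ℝ] ℝ) (φ : C(X, ℝ))
    (htan : ∀ ψ : C(X, ℝ), L ψ ≤ LamF f (φ + ψ) - LamF f φ) (χ : C(X, ℝ))
    (hχ : ∀ μ ∈ MF f, ∫ x, χ x ∂(μ : Measure X) = 0) :
    L χ = 0 := by
  have hnegχ : ∀ μ ∈ MF f, ∫ x, (-χ) x ∂(μ : Measure X) = 0 := fun μ hμ => by
    rw [ContinuousMap.coe_neg, Pi.neg_def, integral_neg, hχ μ hμ, neg_zero]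
  have hle := htan χ
  have hge := htan (-χ)
  rw [LamF_add_eq_of_forall_integral_eq_zero f φ χ hχ] at hle
  rw [LamF_add_eq_of_forall_integral_eq_zero f φ (-χ) hnegχ, map_neg] at hge
  linarith

theorem tangent_flow_invariant_general
    (f : ℝ → X → X)
    (hflow : Continuous fun p : ℝ × X => f p.1 p.2)
    (L : C(X, ℝ) →L[ℝ] ℝ) (φ : C(X, ℝ))
    (htan : ∀ ψ : C(X, ℝ), L ψ ≤ LamF f (φ + ψ) - LamF f φ) :
    ∀ (ψ : C(X, ℝ)) (t : ℝ),
      L (ψ - ψ.comp ⟨fun x => f t x,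
        hflow.comp (Continuous.prodMk continuous_const continuous_id)⟩) = 0 := by
  intro ψ t
  refine tangent_eq_zero_of_forall_integral_eq_zero f L φ htan _ fun μ hμ => ?_
  exact integral_sub_comp_eq_zero_of_map_eq ψ _ (hμ t)

/-- A functional tangent to `Λ_F` at `φ` is flow-invariant:
`L (ψ - ψ ∘ f_t) = 0` for every `ψ ∈ C(X, ℝ)` and `t ∈ ℝ`. -/
theorem tangent_flow_invariant
    (f : ℝ → X → X)
    (hflow : Continuous fun p : ℝ × X => f p.1 p.2)
    (hf0 : f 0 = id) (hfadd : ∀ s t : ℝ, f (s + t) = f s ∘ f t)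
    (L : C(X, ℝ) →L[ℝ] ℝ) (φ : C(X, ℝ))
    (htan : ∀ ψ : C(X, ℝ), L ψ ≤ LamF f (φ + ψ) - LamF f φ) :
    ∀ (ψ : C(X, ℝ)) (t : ℝ),
      L (ψ - ψ.comp ⟨fun x => f t x,
        hflow.comp (Continuous.prodMk continuous_const continuous_id)⟩) = 0 :=
  tangent_flow_invariant_general f hflow L φ htan
end
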